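/- Let Φ = f + g with f : ℝ^d → ℝ convex with L-Lipschitz gradient and g : ℝ^d → ℝ continuous convex, let x⋆ be a minimizer of Φ, let r ≥ 2 and 0 < s ≤ 1/L, and let x_k, y_k be the FISTA iterates x_k = y_{k−1} − s·G_s(y_{k−1}), y_k = x_k + ((k−1)/(k+r))(x_k − x_{k−1}) with x₀ = y₀. Define the Lyapunov function E(k) = sk(k+r)(Φ(x_k) − Φ(x⋆)) + (1/2)‖√s(k−1)v_k + r(x_k − x⋆)‖², where v_k = (x_k − x_{k−1})/√s. Then for every k ≥ 1, E(k+1) − E(k) ≤ −(s²(k+r)²/2)(1 − sL)‖G_s(y_k)‖² − s[(r−2)k + r² − r − 1](Φ(x_{k+1}) − Φ(x⋆)). -/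

import Mathlib

/-!
For `p = P_s y` and `G = (y - p)/s`, the descent lemma for `f`, the gradient inequality for `f`
and the first-order optimality of the proximal step for `g` add up to the inequality
`Φ(p) ≤ Φ(z) + ⟪G, y - z⟫ - s(1 - sL/2)‖G‖²`, valid for every `z`.
The momentum rule turns the Lyapunov vector `w_k = (k-1)(x_k - x_{k-1}) + r(x_k - x⋆)` into
`k(y_k - x_k) + r(y_k - x⋆)`, so that `w_{k+1} = w_k - s(k+r)G_s(y_k)`. Expanding `‖w_{k+1}‖²`
and adding `s(k+r)k` times the inequality at `z = x_k` to `s(k+r)r` times it at `z = x⋆` gives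
the claim.
-/

open scoped RealInnerProductSpace
open Filter Topology Set AffineMap

theorem ConvexOn.sub_le_of_isMinOn_add {E : Type*} [AddCommGroup E] [Module ℝ E]
    {h g : E → ℝ} {p z : E} {h' : ℝ} (hg : ConvexOn ℝ univ g)
    (hmin : IsMinOn (fun w => h w + g w) univ p)
    (hh : HasDerivAt (fun t : ℝ => h (lineMap p z t)) h' 0) :
    g p - h' ≤ g z := by
  set φ : ℝ → ℝ := fun t => h (lineMap p z t)
  set ψ : ℝ → ℝ := fun t => g (lineMap p z t)
  have hψ : ConvexOn ℝ univ ψ := by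
    have hcomp := hg.comp_affineMap (lineMap p z)
    rw [preimage_univ] at hcomp
    exact hcomp
  have hslope : Tendsto (fun t => -slope φ 0 t) (𝓝[>] 0) (𝓝 (-h')) :=
    ((hasDerivAt_iff_tendsto_slope.1 hh).mono_left
      (nhdsWithin_mono _ fun t ht => ne_of_gt ht)).neg
  have hbound : ∀ᶠ t in 𝓝[>] (0 : ℝ), -slope φ 0 t ≤ g z - g p := by
    filter_upwards [Ioc_mem_nhdsGT zero_lt_one] with t ⟨ht0, ht1⟩
    have hmin_t : φ 0 + ψ 0 ≤ φ t + ψ t := by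
      simpa [φ, ψ] using hmin (mem_univ (lineMap p z t))
    have hsum : 0 ≤ slope φ 0 t + slope ψ 0 t := by
      rw [slope_def_field, slope_def_field, ← add_div]
      exact div_nonneg (by linarith) (by linarith)
    have hchord : slope ψ 0 t ≤ slope ψ 0 1 :=
      hψ.slope_mono (mem_univ 0) ⟨mem_univ t, ht0.ne'⟩ ⟨mem_univ 1, one_ne_zero⟩ ht1
    have hψ1 : slope ψ 0 1 = g z - g p := by simp [ψ, slope_def_field]
    linarith
  linarith [le_of_tendsto hslope hbound]

section

variable {E : Type*} [NormedAddCommGroup E] [InnerProductSpace ℝ E]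

theorem ConvexOn.le_add_inner_of_isMinOn_prox {g : E → ℝ} (hg : ConvexOn ℝ univ g) {s : ℝ}
    {u p : E} (hp : IsMinOn (fun w => 1 / (2 * s) * ‖w - u‖ ^ 2 + g w) univ p) (z : E) :
    g p ≤ g z + s⁻¹ * ⟪p - u, z - p⟫ := by
  have hd : HasDerivAt (fun t : ℝ => 1 / (2 * s) * ‖lineMap p z t - u‖ ^ 2)
      (s⁻¹ * ⟪p - u, z - p⟫) 0 := by
    have hline : HasDerivAt (fun t : ℝ => lineMap p z t - u) (z - p) 0 :=
      AffineMap.hasDerivAt_lineMap.sub_const u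
    have hsq := hline.norm_sq
    rw [lineMap_apply_zero] at hsq
    refine (hsq.const_mul (1 / (2 * s))).congr_deriv ?_
    field_simp
  linarith [hg.sub_le_of_isMinOn_add hp hd]

variable [CompleteSpace E] {f : E → ℝ}

theorem HasGradientAt.hasDerivAt_lineMap {f' a b : E} {t : ℝ}
    (hf : HasGradientAt f f' (lineMap a b t)) :
    HasDerivAt (fun t : ℝ => f (lineMap a b t)) ⟪f', b - a⟫ t := by
  simpa [InnerProductSpace.toDual_apply_apply, Function.comp_def] using
    (hasGradientAt_iff_hasFDerivAt.1 hf).comp_hasDerivAt t AffineMap.hasDerivAt_lineMap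

theorem ConvexOn.add_inner_le_of_hasGradientAt {f' x : E} (hf : ConvexOn ℝ univ f)
    (hx : HasGradientAt f f' x) (z : E) : f x + ⟪f', z - x⟫ ≤ f z := by
  have hφ := hf.comp_affineMap (lineMap x z : ℝ →ᵃ[ℝ] E)
  rw [preimage_univ] at hφ
  have hd : HasDerivAt (f ∘ (lineMap x z : ℝ →ᵃ[ℝ] E)) ⟪f', z - x⟫ 0 :=
    HasGradientAt.hasDerivAt_lineMap (by rwa [lineMap_apply_zero])
  have := hφ.le_slope_of_hasDerivAt (mem_univ 0) (mem_univ 1) zero_lt_one hd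
  simp only [slope_def_field, Function.comp_apply, lineMap_apply_one, lineMap_apply_zero,
    sub_zero, div_one] at this
  linarith

theorem le_add_inner_add_of_lipschitz_gradient {f' : E → E} {L : ℝ}
    (hf : ∀ x, HasGradientAt f (f' x) x) (hlip : ∀ x y, ‖f' x - f' y‖ ≤ L * ‖x - y‖)
    (a b : E) :
    f b ≤ f a + ⟪f' a, b - a⟫ + L / 2 * ‖b - a‖ ^ 2 := by
  set u := b - a
  set ψ : ℝ → ℝ := fun t =>
    f (lineMap a b t) - t * ⟪f' a, u⟫ - L / 2 * t ^ 2 * ‖u‖ ^ 2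
  have hψ : ∀ t,
      HasDerivAt ψ (⟪f' (lineMap a b t), u⟫ - ⟪f' a, u⟫ - L * t * ‖u‖ ^ 2) t := by
    intro t
    refine (((hf _).hasDerivAt_lineMap.sub ((hasDerivAt_id t).mul_const _)).sub
      (((hasDerivAt_pow 2 t).const_mul (L / 2)).mul_const _)).congr_deriv ?_
    ring
  obtain ⟨c, ⟨hc0, -⟩, hc⟩ := exists_hasDerivAt_eq_slope ψ _ zero_lt_one
    (fun t _ => (hψ t).continuousAt.continuousWithinAt) fun t _ => hψ t
  have hψ' : ⟪f' (lineMap a b c), u⟫ - ⟪f' a, u⟫ ≤ L * c * ‖u‖ ^ 2 := by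
    have hdist : ‖lineMap a b c - a‖ = c * ‖u‖ := by
      rw [← vsub_eq_sub, lineMap_vsub_left, norm_smul, Real.norm_of_nonneg hc0.le, vsub_eq_sub]
    calc ⟪f' (lineMap a b c), u⟫ - ⟪f' a, u⟫ = ⟪f' (lineMap a b c) - f' a, u⟫ :=
          (inner_sub_left _ _ _).symm
      _ ≤ ‖f' (lineMap a b c) - f' a‖ * ‖u‖ := real_inner_le_norm _ _
      _ ≤ L * ‖lineMap a b c - a‖ * ‖u‖ := by gcongr; exact hlip _ _
      _ = L * c * ‖u‖ ^ 2 := by rw [hdist]; ring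
  simp only [ψ, lineMap_apply_one, lineMap_apply_zero, sub_zero, div_one] at hc
  linarith

theorem proxGrad_step_le {g : E → ℝ} {f' : E → E} {L s : ℝ} (hs : 0 < s)
    (hfconv : ConvexOn ℝ univ f) (hf : ∀ x, HasGradientAt f (f' x) x)
    (hlip : ∀ x y, ‖f' x - f' y‖ ≤ L * ‖x - y‖) (hgconv : ConvexOn ℝ univ g) {y p : E}
    (hp : IsMinOn (fun w => 1 / (2 * s) * ‖w - (y - s • f' y)‖ ^ 2 + g w) univ p) (z : E) :
    f p + g p ≤
      f z + g z + ⟪s⁻¹ • (y - p), y - z⟫ - s * (1 - s * L / 2) * ‖s⁻¹ • (y - p)‖ ^ 2 := by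
  set G := s⁻¹ • (y - p)
  have hpG : p = y - s • G := by simp [G, smul_smul, hs.ne']
  have hdescent := le_add_inner_add_of_lipschitz_gradient hf hlip y p
  have hgrad := hfconv.add_inner_le_of_hasGradientAt (hf y) z
  have hprox := hgconv.le_add_inner_of_isMinOn_prox hp z
  rw [hpG] at hdescent hprox ⊢
  have e1 : y - s • G - y = -(s • G) := by abel
  have e2 : y - s • G - (y - s • f' y) = s • (f' y - G) := by module
  have e3 : z - (y - s • G) = (z - y) + s • G := by abel
  rw [e1] at hdescent
  rw [e2, e3] at hprox
  rw [← neg_sub z y]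
  simp only [inner_neg_right, inner_add_right, real_inner_smul_left, real_inner_smul_right,
    inner_sub_left, norm_neg, norm_smul, Real.norm_eq_abs, abs_of_pos hs, mul_pow,
    real_inner_self_eq_norm_sq] at hdescent hprox ⊢
  rw [← mul_add, inv_mul_cancel_left₀ hs.ne'] at hprox
  linear_combination hdescent + hgrad + hprox

end

section

variable {E : Type*} [NormedAddCommGroup E] [InnerProductSpace ℝ E]

theorem norm_sq_fista_lyapunov_step {K r s : ℝ} {x₀ x x₁ y z G : E} (hKr : K + r ≠ 0)
    (hy : y = x + ((K - 1) / (K + r)) • (x - x₀)) (hx₁ : x₁ = y - s • G) :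
    ‖K • (x₁ - x) + r • (x₁ - z)‖ ^ 2 =
      ‖(K - 1) • (x - x₀) + r • (x - z)‖ ^ 2
        - 2 * (s * (K + r)) * (K * ⟪G, y - x⟫ + r * ⟪G, y - z⟫)
        + (s * (K + r)) ^ 2 * ‖G‖ ^ 2 := by
  have hw : (K - 1) • (x - x₀) + r • (x - z) = K • (y - x) + r • (y - z) := by
    rw [hy]
    match_scalars <;> field_simp <;> ring
  have hw₁ :
      K • (x₁ - x) + r • (x₁ - z) = (K • (y - x) + r • (y - z)) - (s * (K + r)) • G := by
    rw [hx₁]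
    module
  rw [hw₁, hw, norm_sub_sq_real, norm_smul, Real.norm_eq_abs, mul_pow, sq_abs]
  simp only [inner_add_left, real_inner_smul_right, real_inner_comm G]
  ring

end

theorem fista_lyapunov_decay_general {d : ℕ}
    (f g : EuclideanSpace ℝ (Fin d) → ℝ)
    (f' : EuclideanSpace ℝ (Fin d) → EuclideanSpace ℝ (Fin d))
    (L s r : ℝ) (hs : 0 < s) (hr : 2 ≤ r)
    (hfconv : ConvexOn ℝ Set.univ f)
    (hf' : ∀ x, HasGradientAt f (f' x) x)
    (hlip : ∀ x y, ‖f' x - f' y‖ ≤ L * ‖x - y‖)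
    (hgconv : ConvexOn ℝ Set.univ g)
    (Φ : EuclideanSpace ℝ (Fin d) → ℝ) (hΦ : ∀ x, Φ x = f x + g x)
    (P : EuclideanSpace ℝ (Fin d) → EuclideanSpace ℝ (Fin d))
    (hP : ∀ x, IsMinOn (fun z => 1 / (2 * s) * ‖z - (x - s • f' x)‖ ^ 2 + g z) Set.univ (P x))
    (G : EuclideanSpace ℝ (Fin d) → EuclideanSpace ℝ (Fin d))
    (hG : ∀ x, G x = s⁻¹ • (x - P x))
    (xstar : EuclideanSpace ℝ (Fin d))
    (x y : ℕ → EuclideanSpace ℝ (Fin d))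
    (hx : ∀ k : ℕ, x (k + 1) = y k - s • G (y k))
    (hy : ∀ k : ℕ, y (k + 1) =
      x (k + 1) + ((((k : ℝ) + 1) - 1) / (((k : ℝ) + 1) + r)) • (x (k + 1) - x k))
    (v : ℕ → EuclideanSpace ℝ (Fin d))
    (hv : ∀ k : ℕ, 1 ≤ k → v k = (Real.sqrt s)⁻¹ • (x k - x (k - 1))) :
    ∀ k : ℕ, 1 ≤ k →
      (s * ((k : ℝ) + 1) * (((k : ℝ) + 1) + r) * (Φ (x (k + 1)) - Φ xstar) +
          1 / 2 * ‖(Real.sqrt s * (((k : ℝ) + 1) - 1)) • v (k + 1) +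
            r • (x (k + 1) - xstar)‖ ^ 2) -
        (s * (k : ℝ) * ((k : ℝ) + r) * (Φ (x k) - Φ xstar) +
          1 / 2 * ‖(Real.sqrt s * ((k : ℝ) - 1)) • v k + r • (x k - xstar)‖ ^ 2) ≤
      -(s ^ 2 * ((k : ℝ) + r) ^ 2 / 2) * (1 - s * L) * ‖G (y k)‖ ^ 2 -
        s * ((r - 2) * (k : ℝ) + r ^ 2 - r - 1) * (Φ (x (k + 1)) - Φ xstar) := by
  intro k hk
  have hunscale (c : ℝ) (w : EuclideanSpace ℝ (Fin d)) :
      (Real.sqrt s * c) • ((Real.sqrt s)⁻¹ • w) = c • w := by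
    rw [smul_smul, mul_right_comm, mul_inv_cancel₀ (Real.sqrt_pos.2 hs).ne', one_mul]
  have hvk : (Real.sqrt s * ((k : ℝ) - 1)) • v k = ((k : ℝ) - 1) • (x k - x (k - 1)) := by
    rw [hv k hk, hunscale]
  have hvk₁ :
      (Real.sqrt s * ((k : ℝ) + 1 - 1)) • v (k + 1) = (k : ℝ) • (x (k + 1) - x k) := by
    rw [hv (k + 1) (by omega), hunscale, Nat.add_sub_cancel, add_sub_cancel_right]
  have hyk : y k = x k + (((k : ℝ) - 1) / ((k : ℝ) + r)) • (x k - x (k - 1)) := by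
    have hcast : ((k - 1 : ℕ) : ℝ) + 1 = k := by exact_mod_cast Nat.sub_add_cancel hk
    simpa only [Nat.sub_add_cancel hk, hcast] using hy (k - 1)
  have hxP : x (k + 1) = P (y k) := by rw [hx, hG, smul_inv_smul₀ hs.ne', sub_sub_cancel]
  have hstep (z : EuclideanSpace ℝ (Fin d)) :
      Φ (x (k + 1)) ≤ Φ z + ⟪G (y k), y k - z⟫ - s * (1 - s * L / 2) * ‖G (y k)‖ ^ 2 := by
    rw [hxP, hΦ, hΦ, hG]
    exact proxGrad_step_le hs hfconv hf' hlip hgconv (hP (y k)) z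
  rw [hvk, hvk₁, norm_sq_fista_lyapunov_step (by positivity) hyk (hx k)]
  linear_combination (s * (k + r) * k) * hstep (x k) + (s * (k + r) * r) * hstep xstar

/-- **Lyapunov decay for FISTA (implicit-velocity form).** With
`E(k) = sk(k+r)(Φ(x_k) − Φ(x⋆)) + ½‖√s(k−1)v_k + r(x_k − x⋆)‖²`, `v_k = (x_k − x_{k−1})/√s`,
for momentum `r ≥ 2` and step size `0 < s ≤ 1/L`, one has for every `k ≥ 1`:
`E(k+1) − E(k) ≤ −(s²(k+r)²/2)(1 − sL)‖G_s(y_k)‖² − s[(r−2)k + r² − r − 1](Φ(x_{k+1}) − Φ(x⋆))`. -/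
theorem fista_lyapunov_decay {d : ℕ}
    (f g : EuclideanSpace ℝ (Fin d) → ℝ)
    (f' : EuclideanSpace ℝ (Fin d) → EuclideanSpace ℝ (Fin d))
    (L s r : ℝ) (hL : 0 < L) (hs : 0 < s) (hr : 2 ≤ r)
    (hfconv : ConvexOn ℝ Set.univ f)
    (hf' : ∀ x, HasGradientAt f (f' x) x)
    (hlip : ∀ x y, ‖f' x - f' y‖ ≤ L * ‖x - y‖)
    (hgconv : ConvexOn ℝ Set.univ g) (hgcont : Continuous g)
    (Φ : EuclideanSpace ℝ (Fin d) → ℝ) (hΦ : ∀ x, Φ x = f x + g x)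
    (P : EuclideanSpace ℝ (Fin d) → EuclideanSpace ℝ (Fin d))
    (hP : ∀ x, IsMinOn (fun z => 1 / (2 * s) * ‖z - (x - s • f' x)‖ ^ 2 + g z) Set.univ (P x))
    (G : EuclideanSpace ℝ (Fin d) → EuclideanSpace ℝ (Fin d))
    (hG : ∀ x, G x = s⁻¹ • (x - P x))
    (xstar : EuclideanSpace ℝ (Fin d)) (hstar : IsMinOn Φ Set.univ xstar)
    (x y : ℕ → EuclideanSpace ℝ (Fin d)) (hxy0 : x 0 = y 0)
    (hx : ∀ k : ℕ, x (k + 1) = y k - s • G (y k))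
    (hy : ∀ k : ℕ, y (k + 1) =
      x (k + 1) + ((((k : ℝ) + 1) - 1) / (((k : ℝ) + 1) + r)) • (x (k + 1) - x k))
    (hsL : s ≤ 1 / L)
    (v : ℕ → EuclideanSpace ℝ (Fin d))
    (hv : ∀ k : ℕ, 1 ≤ k → v k = (Real.sqrt s)⁻¹ • (x k - x (k - 1))) :
    ∀ k : ℕ, 1 ≤ k →
      (s * ((k : ℝ) + 1) * (((k : ℝ) + 1) + r) * (Φ (x (k + 1)) - Φ xstar) +
          1 / 2 * ‖(Real.sqrt s * (((k : ℝ) + 1) - 1)) • v (k + 1) +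
            r • (x (k + 1) - xstar)‖ ^ 2) -
        (s * (k : ℝ) * ((k : ℝ) + r) * (Φ (x k) - Φ xstar) +
          1 / 2 * ‖(Real.sqrt s * ((k : ℝ) - 1)) • v k + r • (x k - xstar)‖ ^ 2) ≤
      -(s ^ 2 * ((k : ℝ) + r) ^ 2 / 2) * (1 - s * L) * ‖G (y k)‖ ^ 2 -
        s * ((r - 2) * (k : ℝ) + r ^ 2 - r - 1) * (Φ (x (k + 1)) - Φ xstar) :=
  fista_lyapunov_decay_general f g f' L s r hs hr hfconv hf' hlip hgconv Φ hΦ P hP G hG xstar x y hx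
    hy v hv
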